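/- Let n ≥ 1 and 1 ≤ m ≤ n, and let A ∈ ℝ^{n×n}. The average over all pairs (I, J) of m-element subsets of {1,...,n} of the matrix S(I,J) = Σ_{i∈I} e_i·(row_i A) − Σ_{i∈I, j∈J} E_{ij} equals (m/n)·A − (m²/n²)·E, where row_i A denotes the i-th row of A, E_{ij} is the matrix with a 1 in entry (i,j) and 0 elsewhere, and E is the all-ones matrix. -/

import Mathlib

open Finset Matrix

/-! Entrywise, `S(I, J) a b = [a ∈ I] * (A a b - [b ∈ J])` is a function of `I` times a function
of `J`, so its average over pairs is the product of the averages over `I` and over `J`. Each of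
these is an average of membership indicators, and a fixed point lies in exactly the fraction
`m / n` of all `m`-subsets. -/

theorem card_filter_mem_powersetCard_mul_card {α : Type*} [DecidableEq α] {s : Finset α} {a : α}
    (ha : a ∈ s) (m : ℕ) :
    #{I ∈ s.powersetCard m | a ∈ I} * #s = m * (#s).choose m := by
  cases m with
  | zero => simp
  | succ k =>
    obtain ⟨t, ht⟩ := Nat.exists_eq_add_one.2 (card_pos.2 ⟨a, ha⟩)
    simp only [← singleton_subset_iff (a := a)]
    rw [card_filter_powersetCard_subset _ _ _ (singleton_subset_iff.2 ha) (by simp), card_singleton,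
      ht, Nat.add_sub_cancel, Nat.add_sub_cancel, mul_comm, Nat.add_one_mul_choose_eq, mul_comm]

theorem cast_card_filter_mem_powersetCard {α K : Type*} [DecidableEq α] [Field K] [CharZero K]
    {s : Finset α} {a : α} (ha : a ∈ s) (m : ℕ) :
    (#{I ∈ s.powersetCard m | a ∈ I} : K) = m / #s * (#s).choose m := by
  have hs : (#s : K) ≠ 0 := by exact_mod_cast (card_pos.2 ⟨a, ha⟩).ne'
  rw [div_mul_eq_mul_div, eq_div_iff hs]
  exact_mod_cast card_filter_mem_powersetCard_mul_card ha m

variable {ι κ R : Type*} [DecidableEq ι] [Semiring R]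

theorem sum_single_mul_apply [Fintype ι] (I : Finset ι) (A : Matrix ι κ R) (a : ι) (b : κ) :
    (∑ i ∈ I, single i i (1 : R) * A) a b = if a ∈ I then A a b else 0 := by
  rw [Matrix.sum_apply, ← sum_ite_eq I a (fun _ => A a b)]
  refine sum_congr rfl fun i _ => ?_
  by_cases h : a = i <;> simp [h]

theorem sum_sum_single_one_apply [DecidableEq κ] (I : Finset ι) (J : Finset κ) (a : ι) (b : κ) :
    (∑ i ∈ I, ∑ j ∈ J, single i j (1 : R)) a b = if a ∈ I ∧ b ∈ J then 1 else 0 := by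
  simp [Matrix.sum_apply, single_apply, ite_and, sum_ite_eq']

theorem stmt_3_general (n m : ℕ) (h2 : m ≤ n)
    (A : Matrix (Fin n) (Fin n) ℝ) :
    (1 / ((Nat.choose n m : ℝ))^2) •
      (∑ I ∈ (univ : Finset (Fin n)).powersetCard m,
       ∑ J ∈ (univ : Finset (Fin n)).powersetCard m,
        ((∑ i ∈ I, Matrix.single i i (1 : ℝ) * A)
          - ∑ i ∈ I, ∑ j ∈ J, Matrix.single i j (1 : ℝ)))
      = ((m : ℝ) / (n : ℝ)) • A
        - ((m : ℝ)^2 / (n : ℝ)^2) • (Matrix.of fun _ _ => (1 : ℝ)) := by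
  ext a b
  have hn : (n : ℝ) ≠ 0 := by exact_mod_cast a.pos.ne'
  have hC : (n.choose m : ℝ) ≠ 0 := by exact_mod_cast (Nat.choose_pos h2).ne'
  set C : ℝ := (n.choose m : ℝ)
  have hcard (x : Fin n) : (#{I ∈ (univ : Finset (Fin n)).powersetCard m | x ∈ I} : ℝ)
      = m / n * C := by
    simpa using cast_card_filter_mem_powersetCard (mem_univ x) m
  have hentry (I J : Finset (Fin n)) :
      ((∑ i ∈ I, single i i (1 : ℝ) * A) - ∑ i ∈ I, ∑ j ∈ J, single i j (1 : ℝ)) a b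
        = (if a ∈ I then 1 else 0) * (A a b - if b ∈ J then 1 else 0) := by
    rw [Matrix.sub_apply, sum_single_mul_apply, sum_sum_single_one_apply]
    by_cases ha : a ∈ I <;> simp [ha]
  calc _ = 1 / C ^ 2 * ((∑ I ∈ univ.powersetCard m, if a ∈ I then 1 else 0)
        * ∑ J ∈ univ.powersetCard m, (A a b - if b ∈ J then 1 else 0)) := by
        simp only [Matrix.smul_apply, Matrix.sum_apply, hentry, sum_mul_sum, smul_eq_mul]
    _ = 1 / C ^ 2 * (m / n * C * (C * A a b - m / n * C)) := by
        rw [sum_boole, hcard, sum_sub_distrib, sum_boole, hcard, sum_const, card_powersetCard,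
          card_univ, Fintype.card_fin, nsmul_eq_mul]
    _ = _ := by
        simp only [Matrix.sub_apply, Matrix.smul_apply, of_apply, smul_eq_mul]
        field_simp

theorem stmt_3 (n m : ℕ) (hn : 1 ≤ n) (h1 : 1 ≤ m) (h2 : m ≤ n)
    (A : Matrix (Fin n) (Fin n) ℝ) :
    (1 / ((Nat.choose n m : ℝ))^2) •
      (∑ I ∈ (univ : Finset (Fin n)).powersetCard m,
       ∑ J ∈ (univ : Finset (Fin n)).powersetCard m,
        ((∑ i ∈ I, Matrix.single i i (1 : ℝ) * A)
          - ∑ i ∈ I, ∑ j ∈ J, Matrix.single i j (1 : ℝ)))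
      = ((m : ℝ) / (n : ℝ)) • A
        - ((m : ℝ)^2 / (n : ℝ)^2) • (Matrix.of fun _ _ => (1 : ℝ)) :=
  stmt_3_general n m h2 A
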